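/- arXiv:1409.0481 — 2 statements merged into one kernel-verified Lean document; each statement's English description precedes it below -/
import Mathlib

section
/- Let J be the Jacobian of a genus-g curve over K, θ a theta characteristic, l an odd prime different from char K, and for u ∈ J[l] let θ_u be the canonical theta function: the unique function with divisor l(W_{−θ+u} − W_{−θ}) satisfying θ_u · (θ_u ∘ t_u) · ... · (θ_u ∘ t_{(l−1)u}) = 1 and θ_u ∘ [−1] = (θ_u ∘ t_u)^{−1}. Then θ_{−u} = θ_u ∘ [−1]. -/
theorem stmt10_general {K J : Type*} [Field K] [AddCommGroup J]
    (l : ℕ)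
    (WΘ : J → Set J)
    (hWsym : ∀ u : J, (fun x : J => -x) ⁻¹' (WΘ u) = WΘ (-u))
    (dv : (J → K) → ((Set J) →₀ ℤ))
    (hdvneg : ∀ φ : J → K,
      dv (fun x => φ (-x)) = (dv φ).mapDomain fun S => (fun x : J => -x) ⁻¹' S)
    (canonical : J → (J → K) → Prop)
    (hcanonical : ∀ (u : J) (θu : J → K), canonical u θu ↔
      (dv θu = (l : ℤ) • (Finsupp.single (WΘ u) 1 - Finsupp.single (WΘ 0) 1) ∧
        (∀ x : J, ∏ k ∈ Finset.range l, θu (x - k • u) = 1) ∧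
        (∀ x : J, θu (-x) = (θu (x + u))⁻¹)))
    (huniq : ∀ (u : J) (θu θu' : J → K), canonical u θu → canonical u θu' → θu = θu')
    (u : J) (θu θmu : J → K)
    (hθu : canonical u θu) (hθmu : canonical (-u) θmu) :
    θmu = fun x => θu (-x) := by
  obtain ⟨hdiv, hprod, hsymm⟩ := (hcanonical u θu).mp hθu
  refine huniq (-u) θmu _ hθmu ((hcanonical (-u) _).mpr ⟨?_, fun x => ?_, fun x => ?_⟩)
  · rw [hdvneg, hdiv, Finsupp.mapDomain_smul, Finsupp.mapDomain_sub, Finsupp.mapDomain_single,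
      Finsupp.mapDomain_single, hWsym, hWsym, neg_zero]
  · simpa only [smul_neg, sub_neg_eq_add, neg_add'] using hprod (-x)
  · simpa only [neg_neg, neg_add_eq_sub, ← sub_eq_add_neg, neg_sub] using hsymm (-x)

/-- `θ_{−u} = θ_u ∘ [−1]` for canonical theta functions.

`J` is the Jacobian (its points), `WΘ u` is the translated theta divisor `W_{−θ+u}`
(so `WΘ 0 = W_{−θ}`, which is symmetric by `hWsym`). Divisors on `J` are modeled as
formal `ℤ`-combinations of subsets, `dv` is the divisor map, and `hdvneg` expresses the
behaviour of divisors under pullback by `[−1]`. A function `θu` is the canonical theta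
function for `u ∈ J[l]` iff it has divisor `l(W_{−θ+u} − W_{−θ})` and satisfies
`θ_u·(θ_u∘t_u)·⋯·(θ_u∘t_{(l−1)u}) = 1` and `θ_u∘[−1] = (θ_u∘t_u)^{−1}`; it exists and
is unique (`huniq`, from the context). -/
theorem stmt10 {K J : Type*} [Field K] [AddCommGroup J] (g : ℕ) (hg : 2 ≤ g)
    (l : ℕ) (hl : l.Prime) (hlodd : Odd l)
    (WΘ : J → Set J)
    (hWsym : ∀ u : J, (fun x : J => -x) ⁻¹' (WΘ u) = WΘ (-u))
    (dv : (J → K) → ((Set J) →₀ ℤ))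
    (hdvneg : ∀ φ : J → K,
      dv (fun x => φ (-x)) = (dv φ).mapDomain fun S => (fun x : J => -x) ⁻¹' S)
    (canonical : J → (J → K) → Prop)
    (hcanonical : ∀ (u : J) (θu : J → K), canonical u θu ↔
      (dv θu = (l : ℤ) • (Finsupp.single (WΘ u) 1 - Finsupp.single (WΘ 0) 1) ∧
        (∀ x : J, ∏ k ∈ Finset.range l, θu (x - k • u) = 1) ∧
        (∀ x : J, θu (-x) = (θu (x + u))⁻¹)))
    (huniq : ∀ (u : J) (θu θu' : J → K), canonical u θu → canonical u θu' → θu = θu')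
    (u : J) (hu : l • u = 0) (θu θmu : J → K)
    (hθu : canonical u θu) (hθmu : canonical (-u) θmu) :
    θmu = fun x => θu (-x) :=
  stmt10_general l WΘ hWsym dv hdvneg canonical hcanonical huniq u θu θmu hθu hθmu
end

section
/- Let f : J → J/V be the quotient of the Jacobian J by a maximal isotropic subgroup V ⊂ J[l] (l odd prime ≠ char K), Y the divisor on J/V of the descended principal polarization, X = f^*Y, and 𝔲 = Σ e_i[u_i] a zero-cycle on J with base point y. Then the function η_X[𝔲,y] on J with divisor Σ e_i X_{u_i} − X_{s(𝔲)} − (deg 𝔲 − 1)X and value 1 at y is invariant under translation by V, and equals the pullback under f of the unique function on J/V with divisor Σ e_i Y_{v_i} − Y_{s(𝔳)} − (deg 𝔳 − 1)Y taking value 1 at f(y), where v_i = f(u_i). -/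
/-!
Both `η` and `ηq ∘ f` take the value `1` at `y`, and pulling back divisors along `f` turns
the divisor of `ηq` into that of `η`, because `X_u = f^*Y_{f u}`. A function on `J` is
determined by its divisor and one value, so `η = ηq ∘ f`, which is constant on the cosets
of `V = ker f`.
-/

theorem Finsupp.mapDomain_zsmul_single_combination {ι α β : Type*} (g : α → β)
    (s : Finset ι) (e : ι → ℤ) (a : ι → α) (b : α) (c : ℤ) (d : α) :
    Finsupp.mapDomain g ((∑ i ∈ s, e i • Finsupp.single (a i) (1 : ℤ)) - Finsupp.single b 1
      - c • Finsupp.single d 1)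
      = (∑ i ∈ s, e i • Finsupp.single (g (a i)) 1) - Finsupp.single (g b) 1
        - c • Finsupp.single (g d) 1 := by
  change Finsupp.mapDomain.addMonoidHom g _ = _
  simp only [map_sub, map_sum, map_zsmul, Finsupp.mapDomain.addMonoidHom_apply,
    Finsupp.mapDomain_single]

theorem AddMonoidHom.comp_add_of_mem_ker {J Jq R : Type*} [AddGroup J] [AddGroup Jq]
    (f : J →+ Jq) (φ : Jq → R) {v : J} (hv : v ∈ f.ker) (x : J) :
    (φ ∘ f) (x + v) = (φ ∘ f) x := by
  rw [f.mem_ker] at hv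
  simp [hv]

theorem stmt13_general {K J Jq : Type*} [Field K] [AddCommGroup J] [AddCommGroup Jq]
    (f : J →+ Jq)
    (V : AddSubgroup J) (hV : V = f.ker)
    (Yt : Jq → Set Jq)
    (Xt : J → Set J) (hXt : ∀ u2 : J, Xt u2 = f ⁻¹' Yt (f u2))
    (dvJ : (J → K) → ((Set J) →₀ ℤ)) (dvJq : (Jq → K) → ((Set Jq) →₀ ℤ))
    (hpull : ∀ φ : Jq → K, dvJ (φ ∘ f) = (dvJq φ).mapDomain fun S => f ⁻¹' S)
    (huniqJ : ∀ (y0 : J) (φ ψ : J → K), dvJ φ = dvJ ψ → φ y0 = ψ y0 → φ = ψ)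
    (I : ℕ) (e : Fin I → ℤ) (u : Fin I → J) (y : J)
    (η : J → K)
    (hη : dvJ η = (∑ i, e i • Finsupp.single (Xt (u i)) 1)
      - Finsupp.single (Xt (∑ i, e i • u i)) 1
      - ((∑ i, e i) - 1) • Finsupp.single (Xt 0) 1)
    (hηy : η y = 1)
    (ηq : Jq → K)
    (hηq : dvJq ηq = (∑ i, e i • Finsupp.single (Yt (f (u i))) 1)
      - Finsupp.single (Yt (f (∑ i, e i • u i))) 1
      - ((∑ i, e i) - 1) • Finsupp.single (Yt 0) 1)
    (hηqy : ηq (f y) = 1) :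
    (∀ v ∈ V, ∀ x : J, η (x + v) = η x) ∧ η = ηq ∘ f := by
  have hdiv : dvJ (ηq ∘ f) = dvJ η := by
    rw [hpull, hηq, hη, Finsupp.mapDomain_zsmul_single_combination]
    simp only [hXt, map_zero]
  have heq : η = ηq ∘ f := (huniqJ y _ _ hdiv (hηqy.trans hηy.symm)).symm
  refine ⟨fun v hv x => ?_, heq⟩
  rw [heq]
  exact f.comp_add_of_mem_ker ηq (hV ▸ hv) x

/-- Descent of the functions `η_X[𝔲,y]` to the quotient `J/V`.

`f : J → Jq = J/V` is the quotient of the Jacobian by a maximal isotropic subgroup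
`V ⊆ J[l]` (`l` an odd prime). `Yt z` is the translate by `z` of the unique effective
divisor `Y` of the descended principal polarization on `J/V`, and `Xt u = f^*(Y_{f u})`
is the translate `X_u` of `X = f^*Y`. Divisors are modeled as formal `ℤ`-combinations
of subsets, with divisor maps `dvJ`, `dvJq`; `hpull` expresses compatibility of
divisors with pullback along `f`, and `huniqJ` says a function on `J` is determined by
its divisor and one value. Then the function `η = η_X[𝔲,y]` with divisor
`Σ e_i X_{u_i} − X_{s(𝔲)} − (deg 𝔲 − 1)X` and `η(y) = 1` is invariant under translation
by `V` and equals `ηq ∘ f`, where `ηq` is the unique function on `J/V` with divisor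
`Σ e_i Y_{v_i} − Y_{s(𝔳)} − (deg 𝔳 − 1)Y` (`v_i = f(u_i)`) and value `1` at `f(y)`. -/
theorem stmt13 {K J Jq : Type*} [Field K] [AddCommGroup J] [AddCommGroup Jq]
    (l : ℕ) (hl : l.Prime) (hlodd : Odd l)
    (f : J →+ Jq) (hfsurj : Function.Surjective f)
    (V : AddSubgroup J) (hV : V = f.ker) (hVl : ∀ x ∈ V, l • x = 0)
    (Yt : Jq → Set Jq)
    (hYt : ∀ z w : Jq, Yt (z + w) = (· + w) '' Yt z)
    (Xt : J → Set J) (hXt : ∀ u2 : J, Xt u2 = f ⁻¹' Yt (f u2))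
    (dvJ : (J → K) → ((Set J) →₀ ℤ)) (dvJq : (Jq → K) → ((Set Jq) →₀ ℤ))
    (hpull : ∀ φ : Jq → K, dvJ (φ ∘ f) = (dvJq φ).mapDomain fun S => f ⁻¹' S)
    (huniqJ : ∀ (y0 : J) (φ ψ : J → K), dvJ φ = dvJ ψ → φ y0 = ψ y0 → φ = ψ)
    (I : ℕ) (e : Fin I → ℤ) (u : Fin I → J) (y : J)
    (η : J → K)
    (hη : dvJ η = (∑ i, e i • Finsupp.single (Xt (u i)) 1)
      - Finsupp.single (Xt (∑ i, e i • u i)) 1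
      - ((∑ i, e i) - 1) • Finsupp.single (Xt 0) 1)
    (hηy : η y = 1)
    (ηq : Jq → K)
    (hηq : dvJq ηq = (∑ i, e i • Finsupp.single (Yt (f (u i))) 1)
      - Finsupp.single (Yt (f (∑ i, e i • u i))) 1
      - ((∑ i, e i) - 1) • Finsupp.single (Yt 0) 1)
    (hηqy : ηq (f y) = 1) :
    (∀ v ∈ V, ∀ x : J, η (x + v) = η x) ∧ η = ηq ∘ f :=
  stmt13_general f V hV Yt Xt hXt dvJ dvJq hpull huniqJ I e u y η hη hηy ηq hηq hηqy
end
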